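/- arXiv:2004.08938 — 7 statements merged into one kernel-verified Lean document; each statement's English description precedes it below -/
import Mathlib

section
/- Let Q and Q̃ be (n+1)×(n+1) real matrices written in block form Q = [[-1/2, qᵀ], [-q, Q̄]] and Q̃ = [[-1/2 - σ, qᵀ], [-q, Q̄]], where q is an n×1 vector, Q̄ is an invertible n×n matrix, and σ ≠ 0. Assume Q·𝟙 = 0 where 𝟙 is the all-ones vector of length n+1. Then Q̃ is invertible with inverse Q̃⁻¹ = G − (1/σ)·𝟙·bᵀ, where G = [[0, 0], [0, Q̄⁻¹]] and bᵀ = [1, −qᵀQ̄⁻¹]. -/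
/-!
Write `e` for the first unit vector and `𝟙` for the all-ones vector, so that `Q̃ = Q - σ e eᵀ`.
Since `Q 𝟙 = 0` and the first row of `G` vanishes, multiplying out gives
`Q̃ (G - σ⁻¹ 𝟙 bᵀ) = Q G + e bᵀ`, and the block product `Q G = [[0, qᵀ Q̄⁻¹], [0, I]]` is exactly
`1 - e bᵀ`. A right inverse of a square matrix is a two-sided inverse.
-/

open Matrix

theorem Matrix.sub_smul_vecMulVec_mul_sub_smul_vecMulVec_eq_one
    {ι K : Type*} [Fintype ι] [DecidableEq ι] [Field K]
    {Q G : Matrix ι ι K} {u e b : ι → K} {σ : K} (hσ : σ ≠ 0)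
    (hQu : Q *ᵥ u = 0) (heu : e ⬝ᵥ u = 1) (heG : e ᵥ* G = 0)
    (hQG : Q * G = 1 - vecMulVec e b) :
    (Q - σ • vecMulVec e e) * (G - σ⁻¹ • vecMulVec u b) = 1 := by
  have hQub : Q * vecMulVec u b = 0 := by rw [mul_vecMulVec, hQu, zero_vecMulVec]
  have heeG : vecMulVec e e * G = 0 := by rw [vecMulVec_mul, heG, vecMulVec_zero]
  have heeub : vecMulVec e e * vecMulVec u b = vecMulVec e b := by
    rw [vecMulVec_mul_vecMulVec, heu, one_smul]
  simp only [sub_mul, mul_sub, Matrix.mul_smul, Matrix.smul_mul, hQG, hQub, heeG, heeub,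
    smul_zero, smul_smul, inv_mul_cancel₀ hσ, one_smul]
  abel

section Blocks

variable {R ι : Type*} [CommRing R] [DecidableEq ι]

local notation "e₀" => (Pi.single (Sum.inl 0) 1 : Fin 1 ⊕ ι → R)

theorem fromBlocks_sub_corner_eq_sub_smul_vecMulVec (a σ : R) (B : Matrix (Fin 1) ι R)
    (C : Matrix ι (Fin 1) R) (D : Matrix ι ι R) :
    fromBlocks (of fun _ _ => a - σ) B C D =
      fromBlocks (of fun _ _ => a) B C D - σ • vecMulVec e₀ e₀ := by
  ext (i | i) (j | j) <;> simp [vecMulVec_apply, Fin.fin_one_eq_zero]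

theorem single_inl_vecMul_fromBlocks_zero [Fintype ι] (D : Matrix ι ι R) :
    e₀ ᵥ* (fromBlocks 0 0 0 D : Matrix (Fin 1 ⊕ ι) (Fin 1 ⊕ ι) R) = 0 := by
  ext (j | j) <;> simp [vecMul, dotProduct]

theorem fromBlocks_mul_fromBlocks_zero_inv [Fintype ι] (a : R) (q p : ι → R) (D : Matrix ι ι R)
    (hD : IsUnit D.det) :
    fromBlocks (of fun _ _ => a) (of fun _ j => q j) (of fun i _ => p i) D *
        (fromBlocks 0 0 0 D⁻¹ : Matrix (Fin 1 ⊕ ι) (Fin 1 ⊕ ι) R) =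
      1 - vecMulVec e₀ (Sum.elim (fun _ => 1) fun j => -(D⁻¹.vecMul q) j) := by
  rw [fromBlocks_multiply, mul_nonsing_inv _ hD]
  ext (i | i) (j | j) <;>
    simp [vecMulVec_apply, one_apply, vecMul, dotProduct, mul_apply, Fin.fin_one_eq_zero]

end Blocks

/-- Inverse of the SBP-SAT first-derivative matrix `Q̃`. -/
theorem stmt0 (n : ℕ) (q : Fin n → ℝ) (Qb : Matrix (Fin n) (Fin n) ℝ)
    (hQb : IsUnit Qb.det) (σ : ℝ) (hσ : σ ≠ 0)
    (Q : Matrix (Fin 1 ⊕ Fin n) (Fin 1 ⊕ Fin n) ℝ)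
    (hQ : Q = Matrix.fromBlocks (Matrix.of fun _ _ => (-(1/2) : ℝ))
        (Matrix.of fun _ j => q j) (Matrix.of fun i _ => -q i) Qb)
    (hQ1 : Q *ᵥ (fun _ => 1) = 0)
    (Qt : Matrix (Fin 1 ⊕ Fin n) (Fin 1 ⊕ Fin n) ℝ)
    (hQt : Qt = Matrix.fromBlocks (Matrix.of fun _ _ => (-(1/2) - σ : ℝ))
        (Matrix.of fun _ j => q j) (Matrix.of fun i _ => -q i) Qb)
    (G : Matrix (Fin 1 ⊕ Fin n) (Fin 1 ⊕ Fin n) ℝ)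
    (hG : G = Matrix.fromBlocks 0 0 0 Qb⁻¹)
    (b : (Fin 1 ⊕ Fin n) → ℝ)
    (hb : b = Sum.elim (fun _ => (1 : ℝ)) (fun j => -(Qb⁻¹.vecMul q) j)) :
    IsUnit Qt.det ∧ Qt⁻¹ = G - (1/σ) • Matrix.of (fun _ j => b j) := by
  have hQt' : Qt = Q - σ • vecMulVec (Pi.single (Sum.inl 0) 1) (Pi.single (Sum.inl 0) 1) := by
    rw [hQt, hQ, fromBlocks_sub_corner_eq_sub_smul_vecMulVec]
  have hbRow : Matrix.of (fun _ j => b j) = vecMulVec (fun _ : Fin 1 ⊕ Fin n => (1 : ℝ)) b := by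
    ext; simp [vecMulVec_apply]
  have hright : Qt * (G - (1/σ) • Matrix.of (fun _ j => b j)) = 1 := by
    rw [hQt', hbRow, one_div]
    refine sub_smul_vecMulVec_mul_sub_smul_vecMulVec_eq_one hσ hQ1 (by simp) ?_ ?_
    · rw [hG, single_inl_vecMul_fromBlocks_zero]
    · rw [hQ, hG, hb, fromBlocks_mul_fromBlocks_zero_inv _ _ _ _ hQb]
  exact ⟨isUnit_det_of_right_inverse hright, inv_eq_right_inv hright⟩
end

section
/- Let n ≥ 2 and let Q̄ be the n×n matrix with (Q̄)_{i,i+1} = 1/2, (Q̄)_{i+1,i} = −1/2 for 1 ≤ i ≤ n−1, (Q̄)_{n,n} = 1/2, and all other entries zero. Then Q̄ is invertible and its inverse is given (with 1-based indexing) by (Q̄⁻¹)_{i,j} = 2 for j ≤ i with j odd, (Q̄⁻¹)_{i,j} = 0 for j < i with j even, and for i ≤ j: (Q̄⁻¹)_{i,j} = 2(−1)^{i+j} if i is odd and (Q̄⁻¹)_{i,j} = 0 if i is even. -/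
open Matrix Finset

private lemma hpow_neg_one (e : ℕ) : ((-1:ℝ))^e = if e % 2 = 0 then 1 else -1 := by
  rcases Nat.even_or_odd e with h | h
  · rw [h.neg_one_pow, if_pos (Nat.even_iff.mp h)]
  · rw [h.neg_one_pow, if_neg (by simpa [Nat.odd_iff] using h)]

set_option maxHeartbeats 2000000 in
private lemma key_mul (n : ℕ) (hn : 2 ≤ n)
    (Qb : Matrix (Fin n) (Fin n) ℝ)
    (hQb : Qb = Matrix.of fun (i j : Fin n) =>
      if (j : ℕ) = (i : ℕ) + 1 then (1/2 : ℝ)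
      else if (i : ℕ) = (j : ℕ) + 1 then -(1/2)
      else if (i : ℕ) = n - 1 ∧ (j : ℕ) = n - 1 then 1/2
      else 0)
    (G : Matrix (Fin n) (Fin n) ℝ)
    (hG : G = Matrix.of fun (i j : Fin n) =>
      if (j : ℕ) ≤ (i : ℕ) then (if (j : ℕ) % 2 = 0 then (2 : ℝ) else 0)
      else (if (i : ℕ) % 2 = 0 then 2 * (-1 : ℝ)^((i : ℕ) + (j : ℕ)) else 0)) :
    Qb * G = 1 := by
  subst hQb hG
  ext i j
  rw [Matrix.mul_apply, Matrix.one_apply]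
  simp only [Matrix.of_apply]
  have hIlt : (i:ℕ) < n := i.isLt
  have hJlt : (j:ℕ) < n := j.isLt
  rw [Fin.sum_univ_eq_sum_range (fun m =>
    (if m = (i:ℕ) + 1 then (1/2:ℝ)
      else if (i:ℕ) = m + 1 then -(1/2)
      else if (i:ℕ) = n - 1 ∧ m = n - 1 then 1/2 else 0) *
    (if (j:ℕ) ≤ m then (if (j:ℕ) % 2 = 0 then (2:ℝ) else 0)
      else if m % 2 = 0 then 2 * (-1:ℝ)^(m + (j:ℕ)) else 0)) n]
  have hsplit : ∀ m : ℕ,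
      (if m = (i:ℕ) + 1 then (1/2:ℝ)
        else if (i:ℕ) = m + 1 then -(1/2)
        else if (i:ℕ) = n - 1 ∧ m = n - 1 then 1/2 else 0) *
      (if (j:ℕ) ≤ m then (if (j:ℕ) % 2 = 0 then (2:ℝ) else 0)
        else if m % 2 = 0 then 2 * (-1:ℝ)^(m + (j:ℕ)) else 0)
    = (if m = (i:ℕ) + 1 then (1/2:ℝ) *
        (if (j:ℕ) ≤ m then (if (j:ℕ) % 2 = 0 then (2:ℝ) else 0)
          else if m % 2 = 0 then 2 * (-1:ℝ)^(m + (j:ℕ)) else 0) else 0)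
      + (if m = (i:ℕ) - 1 then (if 1 ≤ (i:ℕ) then -(1/2) *
        (if (j:ℕ) ≤ m then (if (j:ℕ) % 2 = 0 then (2:ℝ) else 0)
          else if m % 2 = 0 then 2 * (-1:ℝ)^(m + (j:ℕ)) else 0) else 0) else 0)
      + (if m = n - 1 then (if (i:ℕ) = n - 1 then (1/2:ℝ) *
        (if (j:ℕ) ≤ m then (if (j:ℕ) % 2 = 0 then (2:ℝ) else 0)
          else if m % 2 = 0 then 2 * (-1:ℝ)^(m + (j:ℕ)) else 0) else 0) else 0) := by
    intro m
    have h2 : 2 ≤ n := hn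
    split_ifs <;> first | (exfalso; omega) | ring
  rw [Finset.sum_congr rfl (fun m _ => hsplit m), Finset.sum_add_distrib,
    Finset.sum_add_distrib, Finset.sum_ite_eq' (Finset.range n) ((i:ℕ) + 1),
    Finset.sum_ite_eq' (Finset.range n) ((i:ℕ) - 1),
    Finset.sum_ite_eq' (Finset.range n) (n - 1)]
  simp only [Finset.mem_range, hpow_neg_one, Fin.ext_iff]
  split_ifs <;> first | (exfalso; omega) | norm_num

/-- Explicit inverse of the lower-right block `Q̄` of the second-order SBP
first-derivative matrix.  Indices are 0-based, so "odd column" (1-based) means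
`(j : ℕ) % 2 = 0`. -/
theorem stmt2 (n : ℕ) (hn : 2 ≤ n)
    (Qb : Matrix (Fin n) (Fin n) ℝ)
    (hQb : Qb = Matrix.of fun (i j : Fin n) =>
      if (j : ℕ) = (i : ℕ) + 1 then (1/2 : ℝ)
      else if (i : ℕ) = (j : ℕ) + 1 then -(1/2)
      else if (i : ℕ) = n - 1 ∧ (j : ℕ) = n - 1 then 1/2
      else 0)
    (G : Matrix (Fin n) (Fin n) ℝ)
    (hG : G = Matrix.of fun (i j : Fin n) =>
      if (j : ℕ) ≤ (i : ℕ) then (if (j : ℕ) % 2 = 0 then (2 : ℝ) else 0)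
      else (if (i : ℕ) % 2 = 0 then 2 * (-1 : ℝ)^((i : ℕ) + (j : ℕ)) else 0)) :
    Qb * G = 1 ∧ IsUnit Qb.det ∧ Qb⁻¹ = G := by
  have key := key_mul n hn Qb hQb G hG
  exact ⟨key, Matrix.isUnit_det_of_right_inverse key, Matrix.inv_eq_right_inv key⟩
end

section
/- Let σ < 0 and let Q̃⁻¹ be the (n+1)×(n+1) matrix with entries (Q̃⁻¹)_{i,j} = 1 − (1 + 1/σ)(−1)^j for 0 ≤ j ≤ i ≤ n, and (Q̃⁻¹)_{i,j} = (−1)^{i+j} − (1 + 1/σ)(−1)^j for 0 ≤ i ≤ j ≤ n. Then for the choice σ = −1, the entries satisfy (Q̃⁻¹)_{i,j} = 1 for j ≤ i and (Q̃⁻¹)_{i,j} = (−1)^{i+j} for i ≤ j; moreover this matrix times Q̃ (the second-order SBP-SAT first-derivative matrix with penalty σ = −1) equals the identity. -/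
/-!
Column `j` of `Q̃` has only two nonzero entries, `±1/2` in rows `j ∓ 1` (rows `0, 1` for `j = 0`
and `n - 1, n` for `j = n`), so `(Q̃⁻¹ Q̃)ᵢⱼ` is half a difference (or, in the last column, a sum)
of two entries of row `i` of `Q̃⁻¹`. For `σ = -1` the correction `(1 + 1/σ)(-1)ʲ` vanishes, and
these combinations of the `1`s below the diagonal and the alternating signs above it cancel
except at `j = i`.
-/

open Matrix

namespace SBP

noncomputable def qTilde (n : ℕ) (σ : ℝ) : Matrix (Fin (n+1)) (Fin (n+1)) ℝ :=
  Matrix.of fun (i j : Fin (n+1)) =>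
      if (i : ℕ) = 0 then
        (if (j : ℕ) = 0 then -(1/2) - σ else if (j : ℕ) = 1 then (1/2 : ℝ) else 0)
      else if (i : ℕ) = n then
        (if (j : ℕ) + 1 = n then -(1/2) else if (j : ℕ) = n then 1/2 else 0)
      else
        (if (j : ℕ) + 1 = (i : ℕ) then -(1/2)
         else if (j : ℕ) = (i : ℕ) + 1 then 1/2 else 0)

noncomputable def qTildeInv (n : ℕ) (σ : ℝ) : Matrix (Fin (n+1)) (Fin (n+1)) ℝ :=
  Matrix.of fun (i j : Fin (n+1)) =>
      if (j : ℕ) ≤ (i : ℕ) then 1 - (1 + 1/σ) * (-1 : ℝ)^(j : ℕ)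
      else (-1 : ℝ)^((i : ℕ) + (j : ℕ)) - (1 + 1/σ) * (-1 : ℝ)^(j : ℕ)

def invEntry (i c : ℕ) : ℝ := if c ≤ i then 1 else (-1) ^ (i + c)

theorem qTildeInv_neg_one_apply {n : ℕ} (i j : Fin (n+1)) :
    qTildeInv n (-1) i j = invEntry i j := by
  simp only [qTildeInv, invEntry, of_apply]
  norm_num

theorem invEntry_zero_sub_one_div_two (i : ℕ) :
    (invEntry i 0 - invEntry i 1) / 2 = if i = 0 then 1 else 0 := by
  rcases i with _ | i <;> norm_num [invEntry]

theorem invEntry_sub_invEntry_add_two_div_two (i k : ℕ) :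
    (invEntry i k - invEntry i (k + 2)) / 2 = if i = k + 1 then 1 else 0 := by
  obtain h | rfl | rfl | h : i < k ∨ k = i ∨ i = k + 1 ∨ k + 2 ≤ i := by omega
  · simp [invEntry, show ¬k ≤ i by omega, show ¬k + 2 ≤ i by omega, show i ≠ k + 1 by omega,
      ← add_assoc, pow_add]
  · simp [invEntry, Even.neg_one_pow (⟨k + 1, by ring⟩ : Even (k + (k + 2)))]
  · norm_num [invEntry, Odd.neg_one_pow (⟨k + 1, by ring⟩ : Odd (k + 1 + (k + 2)))]
  · simp [invEntry, h, show k ≤ i by omega, show i ≠ k + 1 by omega]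

theorem invEntry_add_invEntry_succ_div_two {i m : ℕ} (hi : i ≤ m + 1) :
    (invEntry i m + invEntry i (m + 1)) / 2 = if i = m + 1 then 1 else 0 := by
  obtain h | rfl | rfl : i < m ∨ i = m ∨ i = m + 1 := by omega
  · simp [invEntry, show ¬m ≤ i by omega, show ¬m + 1 ≤ i by omega, show i ≠ m + 1 by omega,
      ← add_assoc, pow_succ]
  · simp [invEntry]
  · norm_num [invEntry]

variable {n : ℕ} (σ : ℝ) (v : ℕ → ℝ)

theorem sum_mul_qTilde_zero (hn : 1 ≤ n) :
    ∑ c : Fin (n+1), v c * qTilde n σ c ⟨0, by omega⟩ = (-(1/2) - σ) * v 0 - v 1 / 2 := by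
  rw [Fintype.sum_eq_add ⟨0, by omega⟩ ⟨1, by omega⟩ (by simp [Fin.ext_iff])]
  · simp only [qTilde, of_apply]
    split_ifs <;> first | contradiction | omega | ring
  · rintro ⟨c, hc⟩ ⟨hca, hcb⟩
    simp only [ne_eq, Fin.ext_iff] at hca hcb
    simp only [qTilde, of_apply]
    split_ifs <;> first | contradiction | omega | simp

theorem sum_mul_qTilde_succ {k : ℕ} (hk : k + 1 < n) :
    ∑ c : Fin (n+1), v c * qTilde n σ c ⟨k + 1, by omega⟩ = (v k - v (k + 2)) / 2 := by
  rw [Fintype.sum_eq_add ⟨k, by omega⟩ ⟨k + 2, by omega⟩ (by simp [Fin.ext_iff])]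
  · simp only [qTilde, of_apply]
    split_ifs <;> first | contradiction | omega | ring
  · rintro ⟨c, hc⟩ ⟨hca, hcb⟩
    simp only [ne_eq, Fin.ext_iff] at hca hcb
    simp only [qTilde, of_apply]
    split_ifs <;> first | contradiction | omega | simp

theorem sum_mul_qTilde_last (m : ℕ) :
    ∑ c : Fin (m+2), v c * qTilde (m + 1) σ c ⟨m + 1, by omega⟩ = (v m + v (m + 1)) / 2 := by
  rw [Fintype.sum_eq_add ⟨m, by omega⟩ ⟨m + 1, by omega⟩ (by simp [Fin.ext_iff])]
  · simp only [qTilde, of_apply]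
    split_ifs <;> first | contradiction | omega | ring
  · rintro ⟨c, hc⟩ ⟨hca, hcb⟩
    simp only [ne_eq, Fin.ext_iff] at hca hcb
    simp only [qTilde, of_apply]
    split_ifs <;> first | contradiction | omega | simp

theorem qTildeInv_neg_one_mul_qTilde (hn : 1 ≤ n) : qTildeInv n (-1) * qTilde n (-1) = 1 := by
  ext i ⟨j, hj⟩
  simp only [mul_apply, qTildeInv_neg_one_apply, one_apply, Fin.ext_iff]
  rcases j with _ | k
  · rw [sum_mul_qTilde_zero _ _ hn, ← invEntry_zero_sub_one_div_two]
    ring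
  obtain hk | rfl : k + 1 < n ∨ n = k + 1 := by omega
  · rw [sum_mul_qTilde_succ _ _ hk, invEntry_sub_invEntry_add_two_div_two]
  · rw [sum_mul_qTilde_last, invEntry_add_invEntry_succ_div_two (by omega)]

end SBP

/-- For the dual-consistent choice `σ = -1`, the explicit inverse of the
second-order SBP-SAT first-derivative matrix `Q̃` has entries `1` below the
diagonal and `(-1)^(i+j)` on and above, and it is a (left) inverse of `Q̃`. -/
theorem stmt3 (n : ℕ) (hn : 1 ≤ n) (σ : ℝ) (hσ : σ = -1)
    (Qt : Matrix (Fin (n+1)) (Fin (n+1)) ℝ)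
    (hQt : Qt = Matrix.of fun (i j : Fin (n+1)) =>
      if (i : ℕ) = 0 then
        (if (j : ℕ) = 0 then -(1/2) - σ else if (j : ℕ) = 1 then (1/2 : ℝ) else 0)
      else if (i : ℕ) = n then
        (if (j : ℕ) + 1 = n then -(1/2) else if (j : ℕ) = n then 1/2 else 0)
      else
        (if (j : ℕ) + 1 = (i : ℕ) then -(1/2)
         else if (j : ℕ) = (i : ℕ) + 1 then 1/2 else 0))
    (M : Matrix (Fin (n+1)) (Fin (n+1)) ℝ)
    (hM : M = Matrix.of fun (i j : Fin (n+1)) =>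
      if (j : ℕ) ≤ (i : ℕ) then 1 - (1 + 1/σ) * (-1 : ℝ)^(j : ℕ)
      else (-1 : ℝ)^((i : ℕ) + (j : ℕ)) - (1 + 1/σ) * (-1 : ℝ)^(j : ℕ)) :
    (∀ i j : Fin (n+1), M i j =
        if (j : ℕ) ≤ (i : ℕ) then 1 else (-1 : ℝ)^((i : ℕ) + (j : ℕ)))
      ∧ M * Qt = 1 := by
  subst hσ
  obtain rfl : Qt = SBP.qTilde n (-1) := hQt
  obtain rfl : M = SBP.qTildeInv n (-1) := hM
  exact ⟨SBP.qTildeInv_neg_one_apply, SBP.qTildeInv_neg_one_mul_qTilde hn⟩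
end

section
/- Under the assumptions of the previous statement (A symmetric with A(ℓ𝟙−x)=e_L−e_R, Ax=e_R−e_L, Ā invertible), the boundary entries of A satisfy a_l = a_Lᵀ Ā⁻¹ a_L + 1/ℓ, a_r = a_Rᵀ Ā⁻¹ a_R + 1/ℓ, and a_c = a_Rᵀ Ā⁻¹ a_L − 1/ℓ = a_Lᵀ Ā⁻¹ a_R − 1/ℓ. -/
open Matrix

/-!
Split the indices into the two boundary points `0`, `n` and the interior. For any `v` with
`(A v)` vanishing on the interior, the interior rows give `v̄ = -Ā⁻¹ (v₀ a_L + vₙ a_R)`, and then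
the boundary rows read `(A v)_r = S_{r0} v₀ + S_{rn} vₙ` with `S` the Schur complement of `Ā`.
Applying this to `x` and to `ℓ𝟙 - x`, whose boundary values are `(0, ℓ)` and `(ℓ, 0)`, shows that
`S = ℓ⁻¹ [[1, -1], [-1, 1]]`, which are the four identities.
-/

namespace SBP

variable {K : Type*} [Field K] {n : ℕ}

def interiorEmb (n : ℕ) : Fin (n - 1) → Fin (n + 1) := fun i => ⟨(i : ℕ) + 1, by omega⟩

@[simp]
lemma interiorEmb_ne_zero (i : Fin (n - 1)) : interiorEmb n i ≠ 0 := by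
  simp [interiorEmb, Fin.ext_iff]

@[simp]
lemma interiorEmb_ne_last (i : Fin (n - 1)) : interiorEmb n i ≠ Fin.last n := by
  simp only [interiorEmb, ne_eq, Fin.ext_iff, Fin.val_last]
  omega

lemma sum_eq_zero_add_interior_add_last {M : Type*} [AddCommMonoid M] (hn : 1 ≤ n)
    (f : Fin (n + 1) → M) :
    ∑ j, f j = f 0 + ∑ i, f (interiorEmb n i) + f (Fin.last n) := by
  obtain ⟨m, rfl⟩ : ∃ m, n = m + 1 := ⟨n - 1, by omega⟩
  rw [Fin.sum_univ_succ, Fin.sum_univ_castSucc, ← add_assoc, Fin.succ_last]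
  rfl

lemma mulVec_apply_eq_boundary_add_interior (hn : 1 ≤ n)
    (A : Matrix (Fin (n + 1)) (Fin (n + 1)) K) (v : Fin (n + 1) → K) (r : Fin (n + 1)) :
    (A *ᵥ v) r = A r 0 * v 0 + (fun i => A r (interiorEmb n i)) ⬝ᵥ (v ∘ interiorEmb n)
      + A r (Fin.last n) * v (Fin.last n) :=
  sum_eq_zero_add_interior_add_last hn _

noncomputable def boundarySchur (A : Matrix (Fin (n + 1)) (Fin (n + 1)) K) (r b : Fin (n + 1)) :
    K :=
  A r b - (fun i => A r (interiorEmb n i)) ⬝ᵥ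
    ((A.submatrix (interiorEmb n) (interiorEmb n))⁻¹ *ᵥ fun i => A (interiorEmb n i) b)

lemma interior_inv_mulVec_boundary_cols (hn : 1 ≤ n) {A : Matrix (Fin (n + 1)) (Fin (n + 1)) K}
    (hdet : IsUnit (A.submatrix (interiorEmb n) (interiorEmb n)).det) {v : Fin (n + 1) → K}
    (hv : ∀ i, (A *ᵥ v) (interiorEmb n i) = 0) :
    (A.submatrix (interiorEmb n) (interiorEmb n))⁻¹ *ᵥ
        (v 0 • (fun i => A (interiorEmb n i) 0) +
          v (Fin.last n) • fun i => A (interiorEmb n i) (Fin.last n))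
      = -(v ∘ interiorEmb n) := by
  have := (A.submatrix (interiorEmb n) (interiorEmb n)).invertibleOfIsUnitDet hdet
  refine inv_mulVec_eq_vec ?_
  ext i
  have hi := hv i
  rw [mulVec_apply_eq_boundary_add_interior hn] at hi
  rw [mulVec_neg, Pi.neg_apply]
  change _ = -((fun j => A (interiorEmb n i) (interiorEmb n j)) ⬝ᵥ (v ∘ interiorEmb n))
  simp only [Pi.add_apply, Pi.smul_apply, smul_eq_mul]
  linear_combination hi

lemma boundarySchur_of_isSymm {A : Matrix (Fin (n + 1)) (Fin (n + 1)) K} (hA : A.IsSymm)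
    (r b : Fin (n + 1)) :
    boundarySchur A r b = A r b - (fun i => A (interiorEmb n i) r) ⬝ᵥ
      ((A.submatrix (interiorEmb n) (interiorEmb n))⁻¹ *ᵥ fun i => A (interiorEmb n i) b) := by
  simp only [boundarySchur, hA.apply]

theorem boundarySchur_mul_add_eq_of_mulVec_eq (hn : 1 ≤ n)
    {A : Matrix (Fin (n + 1)) (Fin (n + 1)) K}
    (hdet : IsUnit (A.submatrix (interiorEmb n) (interiorEmb n)).det) {v f : Fin (n + 1) → K}
    (hAv : A *ᵥ v = f) (hf : ∀ i, f (interiorEmb n i) = 0) (r : Fin (n + 1)) :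
    boundarySchur A r 0 * v 0 + boundarySchur A r (Fin.last n) * v (Fin.last n) = f r := by
  subst hAv
  rw [mulVec_apply_eq_boundary_add_interior hn, ← neg_neg (v ∘ interiorEmb n),
    ← interior_inv_mulVec_boundary_cols hn hdet hf]
  simp only [boundarySchur, mulVec_add, mulVec_smul, dotProduct_neg, dotProduct_add,
    dotProduct_smul, smul_eq_mul]
  ring

end SBP

open SBP

/-- The boundary (corner) entries of the SBP second-derivative matrix `A`
are determined by the interior block `Ā` and the boundary columns. -/
theorem stmt5 (n : ℕ) (hn : 2 ≤ n) (h : ℝ) (hh : 0 < h)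
    (A : Matrix (Fin (n+1)) (Fin (n+1)) ℝ) (hAsym : Aᵀ = A)
    (x : Fin (n+1) → ℝ) (hx : x = fun (i : Fin (n+1)) => h * ((i : ℕ) : ℝ))
    (ℓ : ℝ) (hℓ : ℓ = n * h)
    (eL eR : Fin (n+1) → ℝ)
    (heL : eL = fun i => if i = 0 then 1 else 0)
    (heR : eR = fun i => if i = Fin.last n then 1 else 0)
    (hA1 : A *ᵥ (fun i => ℓ * 1 - x i) = eL - eR)
    (hAx : A *ᵥ x = eR - eL)
    (emb : Fin (n-1) → Fin (n+1))
    (hemb : emb = fun i => ⟨(i : ℕ) + 1, by have := i.isLt; omega⟩)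
    (Ab : Matrix (Fin (n-1)) (Fin (n-1)) ℝ)
    (hAb : Ab = Matrix.of fun i j => A (emb i) (emb j))
    (hAbinv : IsUnit Ab.det)
    (aL aR : Fin (n-1) → ℝ)
    (haL : aL = fun i => A (emb i) 0)
    (haR : aR = fun i => A (emb i) (Fin.last n)) :
    A 0 0 = aL ⬝ᵥ (Ab⁻¹ *ᵥ aL) + 1 / ℓ
      ∧ A (Fin.last n) (Fin.last n) = aR ⬝ᵥ (Ab⁻¹ *ᵥ aR) + 1 / ℓ
      ∧ A 0 (Fin.last n) = aR ⬝ᵥ (Ab⁻¹ *ᵥ aL) - 1 / ℓ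
      ∧ A 0 (Fin.last n) = aL ⬝ᵥ (Ab⁻¹ *ᵥ aR) - 1 / ℓ := by
  obtain rfl : emb = interiorEmb n := hemb
  obtain rfl : Ab = A.submatrix (interiorEmb n) (interiorEmb n) := hAb
  subst haL haR heL heR hx hℓ
  have hn0 : n ≠ 0 := by omega
  have hℓ0 : (n : ℝ) * h ≠ 0 := by positivity
  have hn1 : 1 ≤ n := by omega
  have hS00 := boundarySchur_mul_add_eq_of_mulVec_eq hn1 hAbinv hA1 (by simp) 0
  have hS0n := boundarySchur_mul_add_eq_of_mulVec_eq hn1 hAbinv hAx (by simp) 0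
  have hSn0 := boundarySchur_mul_add_eq_of_mulVec_eq hn1 hAbinv hA1 (by simp) (Fin.last n)
  have hSnn := boundarySchur_mul_add_eq_of_mulVec_eq hn1 hAbinv hAx (by simp) (Fin.last n)
  simp only [boundarySchur_of_isSymm hAsym, mul_one, Fin.coe_ofNat_eq_mod, Nat.zero_mod,
    CharP.cast_eq_zero, mul_zero, sub_zero, Fin.val_last, Pi.sub_apply, ↓reduceIte,
    Fin.zero_eq_last_iff, Fin.last_eq_zero_iff, hn0, zero_add, zero_sub] at hS00 hS0n hSn0 hSnn
  rw [IsSymm.apply hAsym 0 (Fin.last n)] at hSn0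
  refine ⟨?_, ?_, ?_, ?_⟩ <;> field_simp
  · linear_combination hS00
  · linear_combination hSnn
  · linear_combination hSn0
  · linear_combination hS0n
end

section
/- For the discrete Green's function G₂ of the second-order narrow-stencil operator, given by (G₂)_{i,j} = x_j(1 − x_i/ℓ) for 0 ≤ j ≤ i ≤ n and (G₂)_{i,j} = x_i(1 − x_j/ℓ) for 0 ≤ i ≤ j ≤ n (with x_i = ih, ℓ = nh), and d_L = (−1, 1, 0, …, 0)ᵀ/h, d_R = (0, …, 0, −1, 1)ᵀ/h, the vectors b_L := 𝟙 − x/ℓ − G₂d_L and b_R := x/ℓ + G₂d_R satisfy b_L = e_L and b_R = e_R, and consequently ξ_L = ξ_R = 1/h and ξ_C = 0. -/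
/-!
The matrix `G₂` samples the Green's function `G(s, t) = min s t * (1 - max s t / ℓ)` of `-u''`
on `[0, ℓ]` with Dirichlet conditions, on any grid `0 = x₀ < … < xₙ = ℓ`. For fixed `s`, the
map `t ↦ G(s, t)` vanishes at both ends and is affine on `[0, s]` with slope `1 - s/ℓ` and on
`[s, ℓ]` with slope `-s/ℓ`. Hence the one-sided difference `G₂ d_L` reproduces `1 - x/ℓ` at
every node except `x₀`, and `G₂ d_R` reproduces `-x/ℓ` at every node except `xₙ`; so `b_L` and
`b_R` are the unit vectors at the two ends, and the values of `ξ` are entries of `d_L`, `d_R`.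
-/

open Matrix

section GreenMatrix

variable {n : ℕ} {ℓ : ℝ} {x : Fin (n + 1) → ℝ}

noncomputable def greenMatrix (ℓ : ℝ) (x : Fin (n + 1) → ℝ) : Matrix (Fin (n + 1)) (Fin (n + 1)) ℝ :=
  of fun i j => if (j : ℕ) ≤ (i : ℕ) then x j * (1 - x i / ℓ) else x i * (1 - x j / ℓ)

lemma greenMatrix_apply_of_le {i j : Fin (n + 1)} (hji : (j : ℕ) ≤ i) :
    greenMatrix ℓ x i j = x j * (1 - x i / ℓ) :=
  if_pos hji

lemma greenMatrix_apply_of_ge {i j : Fin (n + 1)} (hij : (i : ℕ) ≤ j) :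
    greenMatrix ℓ x i j = x i * (1 - x j / ℓ) := by
  by_cases hji : (j : ℕ) ≤ i
  · obtain rfl : i = j := Fin.ext (le_antisymm hij hji)
    exact greenMatrix_apply_of_le hji
  · exact if_neg hji

lemma greenMatrix_apply_zero_right (hx0 : x 0 = 0) (i : Fin (n + 1)) :
    greenMatrix ℓ x i 0 = 0 := by
  rw [greenMatrix_apply_of_le (Nat.zero_le _), hx0, zero_mul]

lemma greenMatrix_apply_last_right (hℓ : ℓ ≠ 0) (hxn : x (Fin.last n) = ℓ) (i : Fin (n + 1)) :
    greenMatrix ℓ x i (Fin.last n) = 0 := by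
  rw [greenMatrix_apply_of_ge (Fin.le_last i), hxn, div_self hℓ, sub_self, mul_zero]

lemma greenMatrix_mulVec_diff_single (i a b : Fin (n + 1)) (c : ℝ) :
    (greenMatrix ℓ x *ᵥ c • (Pi.single b 1 - Pi.single a 1)) i =
      c * (greenMatrix ℓ x i b - greenMatrix ℓ x i a) := by
  simp only [mulVec_smul, mulVec_sub, mulVec_single_one, Pi.smul_apply, Pi.sub_apply, col_apply,
    smul_eq_mul]

theorem one_sub_div_sub_greenMatrix_mulVec_forwardDiff (hx0 : x 0 = 0) (k : Fin (n + 1))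
    (hk : (k : ℕ) = 1) (hxk : x k ≠ 0) :
    (fun i => 1 - x i / ℓ - (greenMatrix ℓ x *ᵥ (x k)⁻¹ • (Pi.single k 1 - Pi.single 0 1)) i) =
      Pi.single 0 1 := by
  funext i
  rw [greenMatrix_mulVec_diff_single, greenMatrix_apply_zero_right hx0, sub_zero, Pi.single_apply]
  split_ifs with hi
  · subst hi
    rw [greenMatrix_apply_of_ge (by simp), hx0]
    simp
  · rw [greenMatrix_apply_of_le (by have : (i : ℕ) ≠ 0 := fun h0 => hi (Fin.ext h0); omega),
      inv_mul_cancel_left₀ hxk, sub_self]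

theorem div_add_greenMatrix_mulVec_backwardDiff (hℓ : ℓ ≠ 0) (hxn : x (Fin.last n) = ℓ)
    (k : Fin (n + 1)) (hk : (k : ℕ) + 1 = n) (hxk : ℓ - x k ≠ 0) :
    (fun i => x i / ℓ +
        (greenMatrix ℓ x *ᵥ (ℓ - x k)⁻¹ • (Pi.single (Fin.last n) 1 - Pi.single k 1)) i) =
      Pi.single (Fin.last n) 1 := by
  funext i
  rw [greenMatrix_mulVec_diff_single, greenMatrix_apply_last_right hℓ hxn, zero_sub,
    Pi.single_apply]
  split_ifs with hi
  · subst hi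
    rw [greenMatrix_apply_of_le (Fin.le_last k), hxn, div_self hℓ]
    ring
  · rw [greenMatrix_apply_of_ge (by have : (i : ℕ) ≠ n := fun hn => hi (Fin.ext hn); omega)]
    field_simp
    ring

end GreenMatrix

lemma forwardDiff_stencil_eq {n : ℕ} (hn : 1 ≤ n) (h : ℝ) :
    (fun i : Fin (n + 1) => if (i : ℕ) = 0 then -(1 / h) else if (i : ℕ) = 1 then 1 / h else 0) =
      h⁻¹ • (Pi.single ⟨1, by omega⟩ 1 - Pi.single 0 1) := by
  funext i
  simp only [Pi.smul_apply, Pi.sub_apply, Pi.single_apply, smul_eq_mul, Fin.ext_iff, Fin.val_zero]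
  split_ifs <;> first | omega | simp

lemma backwardDiff_stencil_eq {n : ℕ} (hn : 1 ≤ n) (h : ℝ) :
    (fun i : Fin (n + 1) => if (i : ℕ) = n then 1 / h else if (i : ℕ) + 1 = n then -(1 / h) else 0) =
      h⁻¹ • (Pi.single (Fin.last n) 1 - Pi.single ⟨n - 1, by omega⟩ 1) := by
  funext i
  simp only [Pi.smul_apply, Pi.sub_apply, Pi.single_apply, smul_eq_mul, Fin.ext_iff, Fin.val_last]
  split_ifs <;> first | omega | simp

/-- For the narrow-stencil (2,0) order SBP operator: `b_L = e_L`, `b_R = e_R`,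
and consequently `ξ_L = ξ_R = 1/h`, `ξ_C = 0`. -/
theorem stmt14 (n : ℕ) (hn : 2 ≤ n) (h : ℝ) (hh : 0 < h)
    (x : Fin (n+1) → ℝ) (hx : x = fun (i : Fin (n+1)) => h * ((i : ℕ) : ℝ))
    (ℓ : ℝ) (hℓ : ℓ = n * h)
    (G2 : Matrix (Fin (n+1)) (Fin (n+1)) ℝ)
    (hG2 : G2 = Matrix.of fun (i j : Fin (n+1)) =>
      if (j : ℕ) ≤ (i : ℕ) then x j * (1 - x i / ℓ) else x i * (1 - x j / ℓ))
    (dL dR eL eR : Fin (n+1) → ℝ)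
    (hdL : dL = fun (i : Fin (n+1)) => if (i : ℕ) = 0 then -(1/h) else if (i : ℕ) = 1 then 1/h else 0)
    (hdR : dR = fun (i : Fin (n+1)) => if (i : ℕ) = n then 1/h else if (i : ℕ) + 1 = n then -(1/h) else 0)
    (heL : eL = fun i => if i = 0 then 1 else 0)
    (heR : eR = fun i => if i = Fin.last n then 1 else 0)
    (bL bR : Fin (n+1) → ℝ)
    (hbL : bL = fun i => 1 - x i / ℓ - (G2 *ᵥ dL) i)
    (hbR : bR = fun i => x i / ℓ + (G2 *ᵥ dR) i) :
    bL = eL ∧ bR = eR ∧ -(dL ⬝ᵥ bL) = 1 / h ∧ dR ⬝ᵥ bR = 1 / h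
      ∧ dL ⬝ᵥ bR = 0 := by
  have hG : G2 = greenMatrix ℓ x := hG2
  set k1 : Fin (n + 1) := ⟨1, by omega⟩
  set km : Fin (n + 1) := ⟨n - 1, by omega⟩
  have hℓ0 : ℓ ≠ 0 := by rw [hℓ]; exact mul_ne_zero (by norm_cast; omega) hh.ne'
  have hxk1 : x k1 = h := by simp [hx, k1]
  have hxkm : ℓ - x km = h := by simp [hx, hℓ, km, Nat.cast_sub (by omega : 1 ≤ n)]; ring
  have hbL' : bL = Pi.single 0 1 := by
    rw [hbL, hG, hdL, forwardDiff_stencil_eq (by omega), ← hxk1]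
    exact one_sub_div_sub_greenMatrix_mulVec_forwardDiff (by simp [hx]) k1 rfl
      (hxk1 ▸ hh.ne')
  have hbR' : bR = Pi.single (Fin.last n) 1 := by
    rw [hbR, hG, hdR, backwardDiff_stencil_eq (by omega), ← hxkm]
    exact div_add_greenMatrix_mulVec_backwardDiff hℓ0 (by simp [hx, hℓ, mul_comm]) km
      (by simp only [km]; omega) (hxkm ▸ hh.ne')
  refine ⟨?_, ?_, ?_, ?_, ?_⟩
  · rw [hbL', heL]; funext i; exact Pi.single_apply _ _ _
  · rw [hbR', heR]; funext i; exact Pi.single_apply _ _ _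
  · simp [hbL', dotProduct_single, hdL]
  · simp [hbR', dotProduct_single, hdR]
  · rw [hbR', dotProduct_single, mul_one, hdL]
    simp only [Fin.val_last]
    rw [if_neg (by omega), if_neg (by omega)]
end

section
/- For the narrow-stencil (2,1) order SBP operator with the same interior Green's function G₂ ((G₂)_{i,j} = x_j(1−x_i/ℓ) for j ≤ i, symmetric) but boundary derivative stencils d_Lᵀ = (1/h)(−3/2, 2, −1/2, 0, …, 0) and d_Rᵀ = (1/h)(0, …, 0, 1/2, −2, 3/2), the vectors b_L = 𝟙 − x/ℓ − G₂d_L and b_R = x/ℓ + G₂d_R satisfy b_L = (1, −1/2, 0, …, 0)ᵀ and b_R = (0, …, 0, −1/2, 1)ᵀ; consequently ξ_L = ξ_R = 5/(2h) and, for n ≥ 4, ξ_C = 0. -/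
/-!
For `j ≤ 2 ≤ i` the entries `(G₂)_{i,j} = x_j (1 - x_i/ℓ)` are linear in `x_j`, and the one-sided
stencil is exact on linear functions, so `(G₂ d_L)_i = 1 - x_i/ℓ` and `(b_L)_i = 0`; only the rows
`i = 0, 1`, which meet the kink of the Green's function, survive. The reflection `i ↦ n - i` fixes
`G₂`, exchanges `x/ℓ` and `1 - x/ℓ`, and turns `d_L` into `-d_R`, so it carries `b_L` to `b_R` and
`ξ_L` to `ξ_R`. For `n ≥ 4` the supports of `d_L` and `b_R` are disjoint, whence `ξ_C = 0`.
-/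

open Matrix

noncomputable section

namespace NarrowSBP

variable {n : ℕ} {h : ℝ}

def leftStencil (n : ℕ) (h : ℝ) : Fin (n+1) → ℝ := fun i =>
  if (i : ℕ) = 0 then -(3/2) / h
  else if (i : ℕ) = 1 then 2 / h
  else if (i : ℕ) = 2 then -(1/2) / h else 0

def rightStencil (n : ℕ) (h : ℝ) : Fin (n+1) → ℝ := fun i =>
  if (i : ℕ) = n then (3/2) / h
  else if (i : ℕ) + 1 = n then -2 / h
  else if (i : ℕ) + 2 = n then (1/2) / h else 0

-- `G₂`, `b_L`, `b_R` on the grid `x_i = i h`, `ℓ = n h`.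
def gridGreen (n : ℕ) (h : ℝ) : Matrix (Fin (n+1)) (Fin (n+1)) ℝ := of fun i j =>
  if (j : ℕ) ≤ (i : ℕ) then h * j * (1 - h * i / (n * h)) else h * i * (1 - h * j / (n * h))

def leftBoundaryVec (n : ℕ) (h : ℝ) : Fin (n+1) → ℝ := fun i =>
  1 - h * i / (n * h) - (gridGreen n h *ᵥ leftStencil n h) i

def rightBoundaryVec (n : ℕ) (h : ℝ) : Fin (n+1) → ℝ := fun i =>
  h * i / (n * h) + (gridGreen n h *ᵥ rightStencil n h) i

lemma dotProduct_leftStencil (hn : 2 ≤ n) (v : Fin (n+1) → ℝ) :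
    v ⬝ᵥ leftStencil n h =
      (-(3/2) * v 0 + 2 * v ⟨1, by omega⟩ - 1/2 * v ⟨2, by omega⟩) / h := by
  obtain ⟨m, rfl⟩ : ∃ m, n = m + 2 := ⟨n - 2, by omega⟩
  simp only [dotProduct, Fin.sum_univ_succ, leftStencil, Fin.val_zero, Fin.val_succ]
  simp only [Nat.add_eq_zero_iff, one_ne_zero, and_false, if_false, if_true, mul_zero,
    Finset.sum_const_zero, add_zero, Nat.reduceEqDiff]
  rw [show ((Fin.succ 0).succ : Fin (m+3)) = ⟨2, by omega⟩ from rfl,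
    show (Fin.succ 0 : Fin (m+3)) = ⟨1, by omega⟩ from rfl]
  ring

lemma rightStencil_eq_neg_leftStencil_rev (i : Fin (n+1)) :
    rightStencil n h i = -leftStencil n h i.rev := by
  simp only [rightStencil, leftStencil, Fin.val_rev]
  split_ifs <;> first | omega | ring

lemma gridGreen_rev (hh : h ≠ 0) (hn : n ≠ 0) (i j : Fin (n+1)) :
    gridGreen n h i.rev j.rev = gridGreen n h i j := by
  have hcast (k : Fin (n+1)) : ((k.rev : ℕ) : ℝ) = n - k := by
    rw [Fin.val_rev, Nat.cast_sub (by omega)]; push_cast; ring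
  have hn' : (n : ℝ) ≠ 0 := by exact_mod_cast hn
  have hle : ((j.rev : ℕ) ≤ i.rev) ↔ (i : ℕ) ≤ j := by simp only [Fin.val_rev]; omega
  simp only [gridGreen, of_apply, hcast, hle]
  split_ifs with hij hji
  · obtain rfl : i = j := Fin.ext (by omega)
    field_simp; ring
  all_goals first | omega | (field_simp; ring)

lemma leftBoundaryVec_eq (hh : h ≠ 0) (hn : 2 ≤ n) :
    leftBoundaryVec n h = fun i : Fin (n+1) =>
      if (i : ℕ) = 0 then (1 : ℝ) else if (i : ℕ) = 1 then -(1/2) else 0 := by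
  funext i
  simp only [leftBoundaryVec, mulVec, dotProduct_leftStencil hn, gridGreen, of_apply]
  split_ifs <;> simp_all <;> first | omega | (field_simp; ring)

lemma rightBoundaryVec_eq_leftBoundaryVec_rev (hh : h ≠ 0) (hn : n ≠ 0) (i : Fin (n+1)) :
    rightBoundaryVec n h i = leftBoundaryVec n h i.rev := by
  have hgrid : h * i / (n * h) = 1 - h * i.rev / (n * h) := by
    have hn' : (n : ℝ) ≠ 0 := by exact_mod_cast hn
    rw [Fin.val_rev, Nat.cast_sub (by omega)]
    field_simp; push_cast; ring
  have hsum : (gridGreen n h *ᵥ rightStencil n h) i = -(gridGreen n h *ᵥ leftStencil n h) i.rev := by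
    simp only [mulVec, dotProduct, rightStencil_eq_neg_leftStencil_rev, mul_neg,
      Finset.sum_neg_distrib, ← gridGreen_rev hh hn i]
    exact congrArg Neg.neg (Equiv.sum_comp Fin.revPerm fun j => gridGreen n h i.rev j * leftStencil n h j)
  rw [rightBoundaryVec, leftBoundaryVec, hgrid, hsum]
  ring

lemma rightBoundaryVec_eq (hh : h ≠ 0) (hn : 2 ≤ n) :
    rightBoundaryVec n h = fun i : Fin (n+1) =>
      if (i : ℕ) = n then (1 : ℝ) else if (i : ℕ) + 1 = n then -(1/2) else 0 := by
  funext i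
  rw [rightBoundaryVec_eq_leftBoundaryVec_rev hh (by omega), leftBoundaryVec_eq hh hn]
  simp only [Fin.val_rev]
  split_ifs <;> first | omega | rfl

lemma neg_leftStencil_dotProduct_leftBoundaryVec (hh : h ≠ 0) (hn : 2 ≤ n) :
    -(leftStencil n h ⬝ᵥ leftBoundaryVec n h) = 5 / (2 * h) := by
  rw [dotProduct_comm, dotProduct_leftStencil hn, leftBoundaryVec_eq hh hn]
  simp only [Fin.val_zero, if_true, one_ne_zero, if_false, OfNat.ofNat_ne_zero, OfNat.ofNat_ne_one]
  field_simp
  norm_num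

lemma rightStencil_dotProduct_rightBoundaryVec (hh : h ≠ 0) (hn : n ≠ 0) :
    rightStencil n h ⬝ᵥ rightBoundaryVec n h = -(leftStencil n h ⬝ᵥ leftBoundaryVec n h) := by
  simp only [dotProduct, rightStencil_eq_neg_leftStencil_rev,
    rightBoundaryVec_eq_leftBoundaryVec_rev hh hn, neg_mul, Finset.sum_neg_distrib]
  exact congrArg Neg.neg (Equiv.sum_comp Fin.revPerm fun j => leftStencil n h j * leftBoundaryVec n h j)

lemma leftStencil_dotProduct_rightBoundaryVec (hh : h ≠ 0) (hn : 4 ≤ n) :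
    leftStencil n h ⬝ᵥ rightBoundaryVec n h = 0 := by
  rw [dotProduct_comm, dotProduct_leftStencil (by omega), rightBoundaryVec_eq hh (by omega)]
  obtain ⟨m, rfl⟩ : ∃ m, n = m + 4 := ⟨n - 4, by omega⟩
  simp

end NarrowSBP

end

open NarrowSBP

/-- For the narrow-stencil (2,1) order SBP operator with one-sided boundary
derivative stencils `(-3/2, 2, -1/2)/h`: `b_L = (1, -1/2, 0, …, 0)ᵀ`,
`b_R = (0, …, 0, -1/2, 1)ᵀ`, `ξ_L = ξ_R = 5/(2h)` and `ξ_C = 0` (for `n ≥ 4`). -/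
theorem stmt15 (n : ℕ) (hn : 4 ≤ n) (h : ℝ) (hh : 0 < h)
    (x : Fin (n+1) → ℝ) (hx : x = fun (i : Fin (n+1)) => h * ((i : ℕ) : ℝ))
    (ℓ : ℝ) (hℓ : ℓ = n * h)
    (G2 : Matrix (Fin (n+1)) (Fin (n+1)) ℝ)
    (hG2 : G2 = Matrix.of fun (i j : Fin (n+1)) =>
      if (j : ℕ) ≤ (i : ℕ) then x j * (1 - x i / ℓ) else x i * (1 - x j / ℓ))
    (dL dR : Fin (n+1) → ℝ)
    (hdL : dL = fun (i : Fin (n+1)) =>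
      if (i : ℕ) = 0 then -(3/2) / h
      else if (i : ℕ) = 1 then 2 / h
      else if (i : ℕ) = 2 then -(1/2) / h else 0)
    (hdR : dR = fun (i : Fin (n+1)) =>
      if (i : ℕ) = n then (3/2) / h
      else if (i : ℕ) + 1 = n then -2 / h
      else if (i : ℕ) + 2 = n then (1/2) / h else 0)
    (bL bR : Fin (n+1) → ℝ)
    (hbL : bL = fun i => 1 - x i / ℓ - (G2 *ᵥ dL) i)
    (hbR : bR = fun i => x i / ℓ + (G2 *ᵥ dR) i) :
    (bL = fun (i : Fin (n+1)) =>
        if (i : ℕ) = 0 then 1 else if (i : ℕ) = 1 then -(1/2) else 0)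
      ∧ (bR = fun (i : Fin (n+1)) =>
        if (i : ℕ) = n then 1 else if (i : ℕ) + 1 = n then -(1/2) else 0)
      ∧ -(dL ⬝ᵥ bL) = 5 / (2 * h) ∧ dR ⬝ᵥ bR = 5 / (2 * h)
      ∧ dL ⬝ᵥ bR = 0 := by
  have hh0 : h ≠ 0 := hh.ne'
  subst hx hℓ
  obtain rfl : G2 = gridGreen n h := hG2
  obtain rfl : dL = leftStencil n h := hdL
  obtain rfl : dR = rightStencil n h := hdR
  obtain rfl : bL = leftBoundaryVec n h := hbL
  obtain rfl : bR = rightBoundaryVec n h := hbR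
  have hξL := neg_leftStencil_dotProduct_leftBoundaryVec hh0 (by omega : 2 ≤ n)
  refine ⟨leftBoundaryVec_eq hh0 (by omega), rightBoundaryVec_eq hh0 (by omega), hξL, ?_,
    leftStencil_dotProduct_rightBoundaryVec hh0 hn⟩
  rwa [rightStencil_dotProduct_rightBoundaryVec hh0 (by omega)]
end

section
/- Non-negativity part of the borrowing lemma: let A = SᵀMS be symmetric PSD with M symmetric positive definite, d_L = Sᵀe_L, d_R = Sᵀe_R, q_D = e_LᵀM⁻¹e_L = e_RᵀM⁻¹e_R, q_C = e_LᵀM⁻¹e_R, and suppose q_D² − q_C² > 0. Then for every vector v: vᵀAv ≥ (1/(q_D + |q_C|))·((vᵀd_L)² + (vᵀd_R)²). -/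
open Matrix

/-!
With `w = S v + M⁻¹ y`, positivity of `M` gives `0 ≤ wᵀ M w = vᵀ A v + 2 (S v)ᵀ y + yᵀ M⁻¹ y`.
For `y = r e_L + s e_R` this is a nonnegative quadratic in `(r, s)` with Gram matrix
`[[q_D, q_C], [q_C, q_D]]`, which is dominated by `(q_D + |q_C|) I`; evaluating at
`(r, s) = -(vᵀd_L, vᵀd_R) / (q_D + |q_C|)` gives the bound.
-/

namespace Matrix

variable {ι : Type*} [Fintype ι]

lemma PosDef.dotProduct_mulVec_add_two_mul_add_inv_nonneg [DecidableEq ι] {M : Matrix ι ι ℝ}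
    (hM : M.PosDef) (x y : ι → ℝ) :
    0 ≤ x ⬝ᵥ M *ᵥ x + 2 * (x ⬝ᵥ y) + y ⬝ᵥ M⁻¹ *ᵥ y := by
  have hMsymm : Mᵀ = M := hM.isHermitian
  have hMMinv : M *ᵥ M⁻¹ *ᵥ y = y := by
    rw [mulVec_mulVec, mul_nonsing_inv _ (isUnit_iff_ne_zero.mpr hM.det_pos.ne'), one_mulVec]
  have hcross : M⁻¹ *ᵥ y ⬝ᵥ M *ᵥ x = x ⬝ᵥ y := by
    rw [← hMsymm, dotProduct_transpose_mulVec, hMsymm, hMMinv]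
  have h := hM.posSemidef.dotProduct_mulVec_nonneg (x + M⁻¹ *ᵥ y)
  simp only [star_trivial, mulVec_add, hMMinv, dotProduct_add, add_dotProduct, hcross] at h
  rw [dotProduct_comm (M⁻¹ *ᵥ y) y] at h
  linarith

lemma dotProduct_mulVec_transpose_mul_mul {κ R : Type*} [Fintype κ] [CommSemiring R]
    (M : Matrix κ κ R) (S : Matrix κ ι R) (v : ι → R) :
    v ⬝ᵥ (Sᵀ * M * S) *ᵥ v = S *ᵥ v ⬝ᵥ M *ᵥ S *ᵥ v := by
  rw [← mulVec_mulVec, ← mulVec_mulVec, dotProduct_transpose_mulVec, dotProduct_comm]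

end Matrix

lemma div_le_of_forall_binary_quadratic_nonneg {Q a b p c : ℝ} (hpc : 0 < p + |c|)
    (h : ∀ r s : ℝ, 0 ≤ Q + 2 * (r * a + s * b) + (p * r ^ 2 + 2 * c * r * s + p * s ^ 2)) :
    (a ^ 2 + b ^ 2) / (p + |c|) ≤ Q := by
  set k := p + |c|
  have hcross : 2 * c * a * b ≤ |c| * (a ^ 2 + b ^ 2) := by
    rcases abs_cases c with ⟨hc, hc0⟩ | ⟨hc, hc0⟩ <;> rw [hc]
    · nlinarith [mul_nonneg hc0 (sq_nonneg (a - b))]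
    · nlinarith [mul_nonneg (neg_nonneg.2 hc0.le) (sq_nonneg (a + b))]
  have hk : 0 ≤ Q * k ^ 2 - 2 * k * (a ^ 2 + b ^ 2) + p * (a ^ 2 + b ^ 2) + 2 * c * a * b := by
    have hk0 : k ≠ 0 := hpc.ne'
    have e : Q * k ^ 2 - 2 * k * (a ^ 2 + b ^ 2) + p * (a ^ 2 + b ^ 2) + 2 * c * a * b =
        k ^ 2 * (Q + 2 * (-a / k * a + -b / k * b) +
          (p * (-a / k) ^ 2 + 2 * c * (-a / k) * (-b / k) + p * (-b / k) ^ 2)) := by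
      field_simp
      ring
    rw [e]
    exact mul_nonneg (sq_nonneg k) (h _ _)
  rw [div_le_iff₀ hpc]
  nlinarith

theorem stmt19_general (n : ℕ)
    (A S M : Matrix (Fin (n+1)) (Fin (n+1)) ℝ)
    (hM : M.PosDef)
    (hfact : A = Sᵀ * M * S)
    (eL eR : Fin (n+1) → ℝ)
    (dL dR : Fin (n+1) → ℝ)
    (hdL : dL = Sᵀ *ᵥ eL) (hdR : dR = Sᵀ *ᵥ eR)
    (qD qC : ℝ)
    (hqD1 : eL ⬝ᵥ (M⁻¹ *ᵥ eL) = qD) (hqD2 : eR ⬝ᵥ (M⁻¹ *ᵥ eR) = qD)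
    (hqC : qC = eL ⬝ᵥ (M⁻¹ *ᵥ eR))
    (hstrict : 0 < qD^2 - qC^2) :
    ∀ v : Fin (n+1) → ℝ,
      (1 / (qD + |qC|)) * ((v ⬝ᵥ dL)^2 + (v ⬝ᵥ dR)^2) ≤ v ⬝ᵥ (A *ᵥ v) := by
  intro v
  have hMinv_symm : (M⁻¹)ᵀ = M⁻¹ := hM.inv.isHermitian
  have hqD : 0 < qD := by
    have := hM.inv.posSemidef.dotProduct_mulVec_nonneg eL
    rw [star_trivial, hqD1] at this
    nlinarith [sq_nonneg qC]
  have hquad (r s : ℝ) : 0 ≤ v ⬝ᵥ A *ᵥ v + 2 * (r * (v ⬝ᵥ dL) + s * (v ⬝ᵥ dR)) +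
      (qD * r ^ 2 + 2 * qC * r * s + qD * s ^ 2) := by
    have h := hM.dotProduct_mulVec_add_two_mul_add_inv_nonneg (S *ᵥ v) (r • eL + s • eR)
    have hqC' : eR ⬝ᵥ M⁻¹ *ᵥ eL = qC := by
      rw [hqC, ← dotProduct_transpose_mulVec, hMinv_symm]
    simp only [mulVec_add, mulVec_smul, dotProduct_add, add_dotProduct, dotProduct_smul,
      smul_dotProduct, smul_eq_mul, hqD1, hqD2, hqC', ← hqC] at h
    rw [hfact, dotProduct_mulVec_transpose_mul_mul, hdL, hdR, dotProduct_transpose_mulVec,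
      dotProduct_transpose_mulVec, dotProduct_comm eL, dotProduct_comm eR]
    linarith
  rw [one_div_mul_eq_div]
  exact div_le_of_forall_binary_quadratic_nonneg (by positivity) hquad

/-- Non-negativity part of the borrowing lemma:
`vᵀAv ≥ (1/(q_D + |q_C|))·((vᵀd_L)² + (vᵀd_R)²)` for every `v`. -/
theorem stmt19 (n : ℕ)
    (A S M : Matrix (Fin (n+1)) (Fin (n+1)) ℝ)
    (hA : A.PosSemidef) (hM : M.PosDef)
    (hfact : A = Sᵀ * M * S)
    (eL eR : Fin (n+1) → ℝ)
    (heL : eL = fun i => if i = 0 then 1 else 0)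
    (heR : eR = fun i => if i = Fin.last n then 1 else 0)
    (dL dR : Fin (n+1) → ℝ)
    (hdL : dL = Sᵀ *ᵥ eL) (hdR : dR = Sᵀ *ᵥ eR)
    (qD qC : ℝ)
    (hqD1 : eL ⬝ᵥ (M⁻¹ *ᵥ eL) = qD) (hqD2 : eR ⬝ᵥ (M⁻¹ *ᵥ eR) = qD)
    (hqC : qC = eL ⬝ᵥ (M⁻¹ *ᵥ eR))
    (hstrict : 0 < qD^2 - qC^2) :
    ∀ v : Fin (n+1) → ℝ,
      (1 / (qD + |qC|)) * ((v ⬝ᵥ dL)^2 + (v ⬝ᵥ dR)^2) ≤ v ⬝ᵥ (A *ᵥ v) :=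
  stmt19_general n A S M hM hfact eL eR dL dR hdL hdR qD qC hqD1 hqD2 hqC hstrict
end
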